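/- arXiv:2409.06948 — 3 statements merged into one kernel-verified Lean document; each statement's English description precedes it below -/
import Mathlib

section
/- The group action φ((A, a^∧, B), (T, b^∧, K)) = (TA, Ad_{A^{-1}}(b^∧ − a^∧), Γ(A)^{-1} K B) of G = (SE₂(3) ⋉ 𝔰𝔢₂(3)) × SE(3) on M = SE₂(3) × 𝔰𝔢₂(3) × SE(3) is transitive: for any ξ₁, ξ₂ ∈ M there exists X ∈ G with φ(X, ξ₁) = ξ₂. -/
open Matrix

noncomputable section

abbrev M5 : Type := Matrix (Fin 5) (Fin 5) ℝ
abbrev M3 : Type := Matrix (Fin 3) (Fin 3) ℝ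

/-- Embed `(C, v, r)` as the 5×5 matrix `[[C, v, r],[0,1,0],[0,0,1]]`. -/
def emb (C : M3) (v r : Fin 3 → ℝ) : M5 :=
  Matrix.of fun i j =>
    if hi : (i : ℕ) < 3 then
      if hj : (j : ℕ) < 3 then C ⟨i, hi⟩ ⟨j, hj⟩
      else if (j : ℕ) = 3 then v ⟨i, hi⟩ else r ⟨i, hi⟩
    else if (i : ℕ) = (j : ℕ) then 1 else 0

/-- Embed `(W, a, b)` as the 5×5 matrix `[[W, a, b],[0,0,0],[0,0,0]]`. -/
def algEmb (W : M3) (a b : Fin 3 → ℝ) : M5 :=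
  Matrix.of fun i j =>
    if hi : (i : ℕ) < 3 then
      if hj : (j : ℕ) < 3 then W ⟨i, hi⟩ ⟨j, hj⟩
      else if (j : ℕ) = 3 then a ⟨i, hi⟩ else b ⟨i, hi⟩
    else 0

def IsSO3 (C : M3) : Prop := C * Cᵀ = 1 ∧ C.det = 1

/-- `A ∈ SE₂(3)`. -/
def IsSE23 (A : M5) : Prop := ∃ C v r, IsSO3 C ∧ A = emb C v r

/-- `A ∈ SE(3)`, embedded in the 5×5 matrices with vanishing second translation. -/
def IsSE3 (A : M5) : Prop := ∃ C l, IsSO3 C ∧ A = emb C l 0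

/-- `u ∈ 𝔰𝔢₂(3)`. -/
def IsAlg23 (u : M5) : Prop := ∃ W a b, Wᵀ = -W ∧ u = algEmb W a b

/-- `u ∈ 𝔰𝔢(3)` (embedded). -/
def IsAlg3 (u : M5) : Prop := ∃ W a, Wᵀ = -W ∧ u = algEmb W a 0

/-- Rotation block of a 5×5 matrix. -/
def rotOf (A : M5) : M3 := fun i j => A (Fin.castLE (by omega) i) (Fin.castLE (by omega) j)

/-- `Γ : SE₂(3) → SO(3)`, re-embedded as a 5×5 matrix. -/
def GammaEmb (A : M5) : M5 := emb (rotOf A) 0 0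

/-- column `j` (top three entries) of a 5×5 matrix. -/
def vcol (A : M5) (j : Fin 5) : Fin 3 → ℝ := fun i => A (Fin.castLE (by omega) i) j

/-- Projection of a `𝔰𝔢₂(3)` element to its `𝔰𝔢(3)` component `(W, a)`. -/
def GammaAlg (u : M5) : M5 := algEmb (rotOf u) (vcol u 3) 0

/-- Rotation-only part of a `𝔰𝔢₂(3)` element (differential of `Γ`). -/
def GammaRotAlg (u : M5) : M5 := algEmb (rotOf u) 0 0

/-- The group action `φ` of `G = (SE₂(3) ⋉ 𝔰𝔢₂(3)) × SE(3)` on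
`M = SE₂(3) × 𝔰𝔢₂(3) × SE(3)`. -/
def phi (A a B T b K : M5) : M5 × M5 × M5 :=
  (T * A, A⁻¹ * (b - a) * A, (GammaEmb A)⁻¹ * K * B)

/-- The constant matrix `D = E_{3,4}` (0-indexed) shifting the `v`-column into the
`r`-column. -/
def Dmat : M5 := Matrix.of fun i j => if (i : ℕ) = 3 ∧ (j : ℕ) = 4 then 1 else 0

/-- The drift vector field `f₁⁰(X) = (O, 0, v) ∈ T_X SE₂(3)`, realized as the
commutator `X D - D X`. -/
def f10 (X : M5) : M5 := X * Dmat - Dmat * X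


section AuxTransitive

lemma fv0 : ((0 : Fin 5) : ℕ) = 0 := rfl
lemma fv1 : ((1 : Fin 5) : ℕ) = 1 := rfl
lemma fv2 : ((2 : Fin 5) : ℕ) = 2 := rfl
lemma fv3 : ((3 : Fin 5) : ℕ) = 3 := rfl
lemma fv4 : ((4 : Fin 5) : ℕ) = 4 := rfl

set_option maxHeartbeats 2000000 in
lemma emb_mul (C C' : M3) (v r v' r' : Fin 3 → ℝ) :
    emb C v r * emb C' v' r' = emb (C * C') (C.mulVec v' + v) (C.mulVec r' + r) := by
  ext i j
  fin_cases i <;> fin_cases j <;>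
    simp [emb, Matrix.mul_apply, Fin.sum_univ_five, Matrix.mulVec, dotProduct,
      Fin.sum_univ_three, fv0, fv1, fv2, fv3, fv4]

lemma emb_one : emb 1 0 0 = (1 : M5) := by
  ext i j
  fin_cases i <;> fin_cases j <;>
    simp [emb, Matrix.one_apply, fv0, fv1, fv2, fv3, fv4]

set_option maxHeartbeats 2000000 in
lemma emb_mul_alg (C : M3) (v r : Fin 3 → ℝ) (W : M3) (a b : Fin 3 → ℝ) :
    emb C v r * algEmb W a b = algEmb (C * W) (C.mulVec a) (C.mulVec b) := by
  ext i j
  fin_cases i <;> fin_cases j <;>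
    simp [emb, algEmb, Matrix.mul_apply, Fin.sum_univ_five, Matrix.mulVec, dotProduct,
      Fin.sum_univ_three, fv0, fv1, fv2, fv3, fv4]

set_option maxHeartbeats 2000000 in
lemma alg_mul_emb (W : M3) (a b : Fin 3 → ℝ) (C : M3) (v r : Fin 3 → ℝ) :
    algEmb W a b * emb C v r = algEmb (W * C) (W.mulVec v + a) (W.mulVec r + b) := by
  ext i j
  fin_cases i <;> fin_cases j <;>
    simp [emb, algEmb, Matrix.mul_apply, Fin.sum_univ_five, Matrix.mulVec, dotProduct,
      Fin.sum_univ_three, fv0, fv1, fv2, fv3, fv4]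

lemma alg_sub (W W' : M3) (a b a' b' : Fin 3 → ℝ) :
    algEmb W a b - algEmb W' a' b' = algEmb (W - W') (a - a') (b - b') := by
  ext i j
  fin_cases i <;> fin_cases j <;>
    simp [algEmb, fv0, fv1, fv2, fv3, fv4]

lemma rotOf_emb (C : M3) (v r : Fin 3 → ℝ) : rotOf (emb C v r) = C := by
  ext i j
  fin_cases i <;> fin_cases j <;> rfl

lemma so3_transpose {C : M3} (h : IsSO3 C) : IsSO3 Cᵀ := by
  refine ⟨?_, by rw [Matrix.det_transpose]; exact h.2⟩
  rw [Matrix.transpose_transpose]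
  exact mul_eq_one_comm.mp h.1

lemma so3_mul {C C' : M3} (h : IsSO3 C) (h' : IsSO3 C') : IsSO3 (C * C') := by
  constructor
  · rw [Matrix.transpose_mul]
    calc C * C' * (C'ᵀ * Cᵀ) = C * (C' * C'ᵀ) * Cᵀ := by simp only [mul_assoc]
    _ = 1 := by rw [h'.1, mul_one, h.1]
  · rw [Matrix.det_mul, h.2, h'.2, one_mul]

lemma emb_mul_right_inv {C : M3} (h : IsSO3 C) (v r : Fin 3 → ℝ) :
    emb C v r * emb Cᵀ (-(Cᵀ.mulVec v)) (-(Cᵀ.mulVec r)) = 1 := by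
  rw [emb_mul, h.1]
  have hv : ∀ w : Fin 3 → ℝ, C.mulVec (-(Cᵀ.mulVec w)) + w = 0 := by
    intro w
    rw [Matrix.mulVec_neg, Matrix.mulVec_mulVec, h.1, Matrix.one_mulVec, neg_add_cancel]
  rw [hv, hv, emb_one]

lemma emb_inv {C : M3} (h : IsSO3 C) (v r : Fin 3 → ℝ) :
    (emb C v r)⁻¹ = emb Cᵀ (-(Cᵀ.mulVec v)) (-(Cᵀ.mulVec r)) :=
  Matrix.inv_eq_right_inv (emb_mul_right_inv h v r)

lemma emb_mul_left_inv {C : M3} (h : IsSO3 C) (v r : Fin 3 → ℝ) :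
    (emb C v r)⁻¹ * emb C v r = 1 := by
  rw [emb_inv h, emb_mul, mul_eq_one_comm.mp h.1]
  have hv : ∀ w : Fin 3 → ℝ, Cᵀ.mulVec w + -(Cᵀ.mulVec w) = 0 := fun w => add_neg_cancel _
  rw [hv, hv, emb_one]

lemma emb_inv_cancel {C : M3} (h : IsSO3 C) (v r : Fin 3 → ℝ) :
    emb C v r * (emb C v r)⁻¹ = 1 := by
  rw [emb_inv h]; exact emb_mul_right_inv h v r

lemma skew_conj {C W : M3} (hC : IsSO3 C) (hW : Wᵀ = -W) :
    (C * W * Cᵀ)ᵀ = -(C * W * Cᵀ) := by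
  rw [Matrix.transpose_mul, Matrix.transpose_mul, Matrix.transpose_transpose, hW]
  simp [mul_assoc]

end AuxTransitive

set_option maxRecDepth 4000 in
/-- The group action `φ` of `G = (SE₂(3) ⋉ 𝔰𝔢₂(3)) × SE(3)` on
`M = SE₂(3) × 𝔰𝔢₂(3) × SE(3)` is transitive: any state `ξ₁ ∈ M` can be mapped to
any other state `ξ₂ ∈ M` by some group element `X = (A, a, B) ∈ G`. -/
theorem phi_is_transitive :
    ∀ T₁ b₁ K₁ T₂ b₂ K₂ : M5,
      IsSE23 T₁ → IsAlg23 b₁ → IsSE3 K₁ →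
      IsSE23 T₂ → IsAlg23 b₂ → IsSE3 K₂ →
      ∃ A a B : M5, IsSE23 A ∧ IsAlg23 a ∧ IsSE3 B ∧
        phi A a B T₁ b₁ K₁ = (T₂, b₂, K₂) := by
  intro T₁ b₁ K₁ T₂ b₂ K₂ hT₁ hb₁ hK₁ hT₂ hb₂ hK₂
  obtain ⟨C₁, v₁, r₁, hC₁, rfl⟩ := hT₁
  obtain ⟨C₂, v₂, r₂, hC₂, rfl⟩ := hT₂
  obtain ⟨W₁, a₁, c₁, hW₁, rfl⟩ := hb₁
  obtain ⟨W₂, a₂, c₂, hW₂, rfl⟩ := hb₂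
  obtain ⟨Q₁, l₁, hQ₁, rfl⟩ := hK₁
  obtain ⟨Q₂, l₂, hQ₂, rfl⟩ := hK₂
  -- the group element
  set CA : M3 := C₁ᵀ * C₂ with hCA
  have hCAso : IsSO3 CA := so3_mul (so3_transpose hC₁) hC₂
  set vA : Fin 3 → ℝ := C₁ᵀ.mulVec v₂ + -(C₁ᵀ.mulVec v₁) with hvA
  set rA : Fin 3 → ℝ := C₁ᵀ.mulVec r₂ + -(C₁ᵀ.mulVec r₁) with hrA
  set A : M5 := emb CA vA rA with hA
  have hAinv : A⁻¹ = emb CAᵀ (-(CAᵀ.mulVec vA)) (-(CAᵀ.mulVec rA)) := emb_inv hCAso _ _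
  -- a := b₁ - A b₂ A⁻¹
  have hconj : A * algEmb W₂ a₂ c₂ * A⁻¹ =
      algEmb (CA * W₂ * CAᵀ)
        ((CA * W₂).mulVec (-(CAᵀ.mulVec vA)) + CA.mulVec a₂)
        ((CA * W₂).mulVec (-(CAᵀ.mulVec rA)) + CA.mulVec c₂) := by
    rw [hAinv, hA, emb_mul_alg, alg_mul_emb]
  set a : M5 := algEmb W₁ a₁ c₁ - A * algEmb W₂ a₂ c₂ * A⁻¹ with ha
  set B : M5 := (emb Q₁ l₁ 0)⁻¹ * (GammaEmb A * emb Q₂ l₂ 0) with hB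
  have hGA : GammaEmb A = emb CA 0 0 := by rw [GammaEmb, hA, rotOf_emb]
  refine ⟨A, a, B, ⟨CA, vA, rA, hCAso, rfl⟩, ?_, ?_, ?_⟩
  · -- a ∈ 𝔰𝔢₂(3)
    rw [ha, hconj, alg_sub]
    refine ⟨_, _, _, ?_, rfl⟩
    rw [Matrix.transpose_sub, hW₁, skew_conj hCAso hW₂]; abel
  · -- B ∈ SE(3)
    rw [hB, hGA, emb_inv hQ₁, emb_mul, emb_mul]
    have hz : Q₁ᵀ.mulVec (CA.mulVec (0 : Fin 3 → ℝ) + 0) + -(Q₁ᵀ.mulVec (0 : Fin 3 → ℝ)) = 0 := by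
      simp
    rw [hz]
    exact ⟨_, _, so3_mul (so3_transpose hQ₁) (so3_mul hCAso hQ₂), rfl⟩
  · -- φ(X, ξ₁) = ξ₂
    have hcc : C₁ * CA = C₂ := by rw [hCA, ← mul_assoc, hC₁.1, one_mul]
    have hvv : ∀ w w' : Fin 3 → ℝ, C₁.mulVec (C₁ᵀ.mulVec w + -(C₁ᵀ.mulVec w')) + w' = w := by
      intro w w'
      rw [Matrix.mulVec_add, Matrix.mulVec_neg, Matrix.mulVec_mulVec, Matrix.mulVec_mulVec,
        hC₁.1, Matrix.one_mulVec, Matrix.one_mulVec]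
      abel
    have hTmul : emb C₁ v₁ r₁ * A = emb C₂ v₂ r₂ := by
      rw [hA, emb_mul, hcc, hvA, hrA, hvv, hvv]
    have hAleft : A⁻¹ * A = 1 := emb_mul_left_inv hCAso _ _
    have hAright : A * A⁻¹ = 1 := emb_inv_cancel hCAso _ _
    have hmid : A⁻¹ * (algEmb W₁ a₁ c₁ - a) * A = algEmb W₂ a₂ c₂ := by
      rw [ha, sub_sub_cancel]
      calc A⁻¹ * (A * algEmb W₂ a₂ c₂ * A⁻¹) * A
          = (A⁻¹ * A) * algEmb W₂ a₂ c₂ * (A⁻¹ * A) := by simp only [mul_assoc]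
        _ = algEmb W₂ a₂ c₂ := by rw [hAleft, one_mul, mul_one]
    have hKmul : (GammaEmb A)⁻¹ * emb Q₁ l₁ 0 * B = emb Q₂ l₂ 0 := by
      rw [hB]
      have hK₁c : emb Q₁ l₁ 0 * (emb Q₁ l₁ 0)⁻¹ = 1 := emb_inv_cancel hQ₁ _ _
      have hGc : (GammaEmb A)⁻¹ * GammaEmb A = 1 := by
        rw [hGA]; exact emb_mul_left_inv hCAso _ _
      calc (GammaEmb A)⁻¹ * emb Q₁ l₁ 0 * ((emb Q₁ l₁ 0)⁻¹ * (GammaEmb A * emb Q₂ l₂ 0))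
          = (GammaEmb A)⁻¹ * (emb Q₁ l₁ 0 * (emb Q₁ l₁ 0)⁻¹) * GammaEmb A * emb Q₂ l₂ 0 := by
            simp only [mul_assoc]
        _ = ((GammaEmb A)⁻¹ * GammaEmb A) * emb Q₂ l₂ 0 := by rw [hK₁c, mul_one]
        _ = emb Q₂ l₂ 0 := by rw [hGc, one_mul]
    simp only [phi, hTmul, hmid, hKmul]
end
end

section
/- For any unit vector g = (x, y, z)ᵀ ∈ S² with z ≠ −1, the matrix B_g satisfies B_gᵀ B_g = I₂, i.e., the transpose B_gᵀ is the Moore–Penrose pseudoinverse of B_g. -/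
/-!
Writing `u = g + e₃ = (x, y, 1 + z)`, the unit condition gives `uᵀu = 2(1 + z)`, so
`I₃ - uuᵀ/(1 + z)` is the Householder reflection in `u⊥`, and `B_g` consists of its first two
columns. A reflection is orthogonal, so its columns are orthonormal.
-/

open Matrix

noncomputable section

/-- The 3×2 tangent-basis matrix `B_g` for `g = (x, y, z)ᵀ ∈ S²` with `z ≠ −1`. -/
def Bmat (x y z : ℝ) : Matrix (Fin 3) (Fin 2) ℝ :=
  !![1 - x ^ 2 / (1 + z), -(x * y) / (1 + z);
     -(x * y) / (1 + z), 1 - y ^ 2 / (1 + z);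
     -x, -y]

theorem transpose_mul_self_one_sub_smul_vecMulVec {n K : Type*} [Fintype n] [DecidableEq n]
    [Field K] (u : n → K) {c : K} (hc : c ≠ 0) (hu : u ⬝ᵥ u = 2 * c) :
    (1 - c⁻¹ • vecMulVec u u)ᵀ * (1 - c⁻¹ • vecMulVec u u) = 1 := by
  have hsq : vecMulVec u u * vecMulVec u u = (2 * c) • vecMulVec u u := by
    rw [vecMulVec_mul_vecMulVec, hu, vecMulVec_smul]
  have hcoef : c⁻¹ * c⁻¹ * (2 * c) = 2 * c⁻¹ := by field_simp
  rw [transpose_sub, transpose_one, transpose_smul, transpose_vecMulVec, sub_mul, mul_sub,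
    mul_sub, smul_mul_smul_comm, hsq, smul_smul, hcoef, Matrix.mul_one, Matrix.one_mul,
    Matrix.mul_one]
  module

theorem transpose_mul_self_submatrix_of_transpose_mul_self {m n K : Type*} [Fintype m]
    [DecidableEq m] [DecidableEq n] [CommSemiring K] {Q : Matrix m m K} (hQ : Qᵀ * Q = 1)
    {f : n → m} (hf : Function.Injective f) : (Q.submatrix id f)ᵀ * Q.submatrix id f = 1 := by
  rw [transpose_submatrix, ← submatrix_mul _ _ _ id _ Function.bijective_id, hQ,
    submatrix_one _ hf]

theorem Bmat_eq_submatrix (x y z : ℝ) (hz : 1 + z ≠ 0) :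
    Bmat x y z = (1 - (1 + z)⁻¹ • vecMulVec ![x, y, 1 + z] ![x, y, 1 + z]).submatrix id
      Fin.castSucc := by
  ext i j
  fin_cases i <;> fin_cases j <;> simp [Bmat] <;> field_simp

/-- For any unit vector `g = (x, y, z)ᵀ ∈ S²` with `z ≠ −1`,
`B_gᵀ B_g = I₂`; hence (the matrix having full column rank) the transpose `B_gᵀ`
is the Moore–Penrose pseudoinverse `(B_gᵀ B_g)⁻¹ B_gᵀ` of `B_g`. -/
theorem Bmat_transpose_mul_self (x y z : ℝ) (hunit : x ^ 2 + y ^ 2 + z ^ 2 = 1)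
    (hz : z ≠ -1) :
    (Bmat x y z)ᵀ * Bmat x y z = 1 ∧
      ((Bmat x y z)ᵀ * Bmat x y z)⁻¹ * (Bmat x y z)ᵀ = (Bmat x y z)ᵀ := by
  have hc : 1 + z ≠ 0 := fun h => hz (by linarith)
  have hu : ![x, y, 1 + z] ⬝ᵥ ![x, y, 1 + z] = 2 * (1 + z) := by
    simp only [dotProduct, Fin.sum_univ_three, Matrix.cons_val]
    linear_combination hunit
  have key : (Bmat x y z)ᵀ * Bmat x y z = 1 := by
    rw [Bmat_eq_submatrix x y z hc]
    exact transpose_mul_self_submatrix_of_transpose_mul_self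
      (transpose_mul_self_one_sub_smul_vecMulVec _ hc hu) (Fin.castSucc_injective 2)
  exact ⟨key, by rw [key, inv_one, Matrix.one_mul]⟩
end
end

section
/- Let g_k, g_{k+1} ∈ S² be unit vectors with g_k · g_{k+1} > −1 (not antipodal) and with the z-component of g_k ≠ −1. Define the error ε_g = arccos(g_k · g_{k+1}) · B_{g_k}ᵀ (g_k × g_{k+1}) / ‖g_k × g_{k+1}‖ when g_k ≠ g_{k+1} (rotation-vector form). Then exp((B_{g_k} ε_g)^∧) g_k = g_{k+1}. -/
/-!
`B Bᵀ = 1 - g gᵀ` is the orthogonal projection onto the tangent plane at `g`, so it fixes the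
axis `g × g'`, and the update is the rotation `exp(θ û)` with `u = (g × g') / ‖g × g'‖` and
`θ = arccos (g ⬝ g')`. Since `û³ = -û` for a unit vector `u`, Rodrigues' formula
`exp(θ û) = 1 + sin θ û + (1 - cos θ) û²` holds, and on `g ⊥ u` it gives `cos θ g + sin θ u × g`.
Finally `(g × g') × g = g' - (g ⬝ g') g` and `sin θ = √(1 - (g ⬝ g')²) = ‖g × g'‖`, which
yields `g'`.
-/

open Matrix

noncomputable section

/-- The skew-symmetric hat map `(w)^∧`, with `(w)^∧ u = w × u`. -/
def hat (w : Fin 3 → ℝ) : Matrix (Fin 3) (Fin 3) ℝ :=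
  !![0, -w 2, w 1; w 2, 0, -w 0; -w 1, w 0, 0]

open Real
open scoped Nat

section Rodrigues

variable {𝔸 : Type*} [Ring 𝔸] [Algebra ℝ 𝔸] {A : 𝔸}

theorem pow_two_mul_add_one_of_pow_three_eq_neg (h : A ^ 3 = -A) (k : ℕ) :
    A ^ (2 * k + 1) = (-1 : ℝ) ^ k • A := by
  induction k with
  | zero => simp
  | succ k ih =>
    rw [show 2 * (k + 1) + 1 = 2 * k + 1 + 2 by ring, pow_add, ih, smul_mul_assoc, ← pow_succ',
      h, pow_succ, mul_neg_one, neg_smul, smul_neg]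

theorem pow_two_mul_add_two_of_pow_three_eq_neg (h : A ^ 3 = -A) (k : ℕ) :
    A ^ (2 * k + 2) = (-1 : ℝ) ^ k • A ^ 2 := by
  rw [pow_succ, pow_two_mul_add_one_of_pow_three_eq_neg h, smul_mul_assoc, ← sq]

variable [TopologicalSpace 𝔸] [IsTopologicalRing 𝔸] [ContinuousSMul ℝ 𝔸] [T2Space 𝔸]

theorem exp_smul_of_pow_three_eq_neg (h : A ^ 3 = -A) (θ : ℝ) :
    NormedSpace.exp (θ • A) = 1 + sin θ • A + (1 - cos θ) • A ^ 2 := by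
  rw [NormedSpace.exp_eq_tsum ℝ]
  refine HasSum.tsum_eq ?_
  have hodd : HasSum (fun k : ℕ => ((2 * k + 1)! : ℝ)⁻¹ • (θ • A) ^ (2 * k + 1)) (sin θ • A) := by
    convert (Real.hasSum_sin θ).smul_const A using 2 with k
    rw [smul_pow, pow_two_mul_add_one_of_pow_three_eq_neg h, smul_smul, smul_smul]
    ring_nf
  -- the constant term `1` breaks the pattern `A ^ (2k+2) = (-1)^k • A ^ 2` of the even powers
  have heven_term (k : ℕ) : ((2 * k)! : ℝ)⁻¹ • (θ • A) ^ (2 * k) =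
      (if k = 0 then 1 + A ^ 2 else 0) - ((-1) ^ k * θ ^ (2 * k) / (2 * k)!) • A ^ 2 := by
    rcases k with _ | k
    · simp
    · rw [smul_pow, show 2 * (k + 1) = 2 * k + 2 by ring,
        pow_two_mul_add_two_of_pow_three_eq_neg h, smul_smul, smul_smul, if_neg k.succ_ne_zero,
        zero_sub, ← neg_smul]
      congr 1
      ring
  have heven : HasSum (fun k : ℕ => ((2 * k)! : ℝ)⁻¹ • (θ • A) ^ (2 * k))
      (1 + (1 - cos θ) • A ^ 2) := by
    rw [show 1 + (1 - cos θ) • A ^ 2 = (1 + A ^ 2) - cos θ • A ^ 2 by module]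
    simp_rw [heven_term]
    exact (hasSum_ite_eq 0 (1 + A ^ 2)).sub ((Real.hasSum_cos θ).smul_const (A ^ 2))
  rw [add_right_comm]
  exact heven.even_add_odd hodd

end Rodrigues

theorem sum_sq_eq_dotProduct_self {n : Type*} [Fintype n] (v : n → ℝ) : ∑ i, v i ^ 2 = v ⬝ᵥ v := by
  simp only [dotProduct, sq]

theorem dotProduct_lt_one_of_ne {n : Type*} [Fintype n] {u v : n → ℝ} (hu : u ⬝ᵥ u = 1)
    (hv : v ⬝ᵥ v = 1) (huv : u ≠ v) : u ⬝ᵥ v < 1 := by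
  have hpos : 0 < (u - v) ⬝ᵥ (u - v) :=
    (dotProduct_self_star_nonneg _).lt_of_ne' (dotProduct_self_eq_zero.not.2 (sub_ne_zero.2 huv))
  rw [sub_dotProduct, dotProduct_sub, dotProduct_sub, hu, hv, dotProduct_comm v u] at hpos
  linarith

theorem hat_mulVec (w v : Fin 3 → ℝ) : hat w *ᵥ v = w ⨯₃ v := by
  ext i
  fin_cases i <;> simp [hat, mulVec, dotProduct, Fin.sum_univ_three, cross_apply] <;> ring

theorem hat_smul (t : ℝ) (w : Fin 3 → ℝ) : hat (t • w) = t • hat w := by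
  ext i j
  fin_cases i <;> fin_cases j <;> simp [hat]

theorem hat_pow_three (w : Fin 3 → ℝ) : hat w ^ 3 = -((w ⬝ᵥ w) • hat w) := by
  refine ext_iff_mulVec.2 fun v => ?_
  rw [pow_three, ← mulVec_mulVec, ← mulVec_mulVec, neg_mulVec, smul_mulVec, hat_mulVec,
    hat_mulVec, hat_mulVec, cross_cross_eq_smul_sub_smul', dot_self_cross, zero_smul, zero_sub]

theorem exp_smul_hat_mulVec_of_dotProduct_eq_zero {u v : Fin 3 → ℝ} (hu : u ⬝ᵥ u = 1)
    (huv : u ⬝ᵥ v = 0) (θ : ℝ) :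
    NormedSpace.exp (θ • hat u) *ᵥ v = cos θ • v + sin θ • u ⨯₃ v := by
  rw [exp_smul_of_pow_three_eq_neg (by rw [hat_pow_three, hu, one_smul]), add_mulVec, add_mulVec,
    one_mulVec, smul_mulVec, smul_mulVec, sq, ← mulVec_mulVec, hat_mulVec, hat_mulVec,
    cross_cross_eq_smul_sub_smul', huv, hu]
  module

theorem Bmat_mul_transpose {g : Fin 3 → ℝ} (hg : g ⬝ᵥ g = 1) (hz : g 2 ≠ -1) :
    Bmat (g 0) (g 1) (g 2) * (Bmat (g 0) (g 1) (g 2))ᵀ = 1 - vecMulVec g g := by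
  have h : g 0 ^ 2 + g 1 ^ 2 + g 2 ^ 2 = 1 := by
    rw [← hg]; simp [dotProduct, Fin.sum_univ_three, sq]
  have hz' : 1 + g 2 ≠ 0 := fun h => hz (by linarith)
  ext i j
  fin_cases i <;> fin_cases j <;>
    simp [Bmat, mul_apply, Fin.sum_univ_two, vecMulVec, one_apply] <;> field_simp <;>
    first
      | linear_combination h
      | linear_combination g 0 * h
      | linear_combination g 1 * h
      | linear_combination g 0 ^ 2 * h
      | linear_combination g 1 ^ 2 * h
      | linear_combination g 0 * g 1 * h

theorem Bmat_mulVec_transpose_mulVec_of_dotProduct_eq_zero {g v : Fin 3 → ℝ} (hg : g ⬝ᵥ g = 1)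
    (hz : g 2 ≠ -1) (hv : g ⬝ᵥ v = 0) :
    Bmat (g 0) (g 1) (g 2) *ᵥ ((Bmat (g 0) (g 1) (g 2))ᵀ *ᵥ v) = v := by
  rw [mulVec_mulVec, Bmat_mul_transpose hg hz, sub_mulVec, one_mulVec, vecMulVec_mulVec, hv]
  simp

theorem exp_hat_arccos_div_smul_cross_mulVec {g g' : Fin 3 → ℝ} (hg : g ⬝ᵥ g = 1)
    (hg' : g' ⬝ᵥ g' = 1) (h₁ : -1 < g ⬝ᵥ g') (h₂ : g ⬝ᵥ g' < 1) :
    NormedSpace.exp (hat ((arccos (g ⬝ᵥ g') / √((g ⨯₃ g') ⬝ᵥ (g ⨯₃ g'))) • g ⨯₃ g')) *ᵥ g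
      = g' := by
  set d := g ⬝ᵥ g'
  set c := g ⨯₃ g'
  have hcc : c ⬝ᵥ c = 1 - d ^ 2 := by
    rw [cross_dot_cross, hg, hg', dotProduct_comm g' g]
    ring
  set s := √(c ⬝ᵥ c)
  have hsin : sin (arccos d) = s := by rw [sin_arccos, ← hcc]
  have hcc_pos : 0 < c ⬝ᵥ c := by rw [hcc]; nlinarith
  have hs : s ≠ 0 := (sqrt_pos.2 hcc_pos).ne'
  have hu : (s⁻¹ • c) ⬝ᵥ (s⁻¹ • c) = 1 := by
    rw [smul_dotProduct, dotProduct_smul, smul_eq_mul, smul_eq_mul, ← mul_assoc, ← mul_inv,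
      ← sq, sq_sqrt hcc_pos.le, inv_mul_cancel₀ hcc_pos.ne']
  have hug : (s⁻¹ • c) ⬝ᵥ g = 0 := by
    rw [smul_dotProduct, dotProduct_comm, dot_self_cross, smul_zero]
  rw [show (arccos d / s) • c = arccos d • s⁻¹ • c by rw [smul_smul, div_eq_mul_inv], hat_smul,
    exp_smul_hat_mulVec_of_dotProduct_eq_zero hu hug, cos_arccos h₁.le h₂.le, hsin,
    LinearMap.map_smul₂, cross_cross_eq_smul_sub_smul, hg, dotProduct_comm g' g, smul_smul,
    mul_inv_cancel₀ hs]
  module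

/-- Let `g_k, g_{k+1} ∈ S²` be unit vectors with
`g_k ⬝ g_{k+1} > −1` (not antipodal), `g_k ≠ g_{k+1}`, and the `z`-component of `g_k`
different from `−1`. Define the error
`ε_g = arccos(g_k ⬝ g_{k+1}) · B_{g_k}ᵀ (g_k × g_{k+1}) / ‖g_k × g_{k+1}‖`.
Then `exp((B_{g_k} ε_g)^∧) g_k = g_{k+1}`. -/
theorem gravity_error_update (gk gk1 : Fin 3 → ℝ)
    (hk : ∑ i, gk i ^ 2 = 1) (hk1 : ∑ i, gk1 i ^ 2 = 1)
    (hdot : gk ⬝ᵥ gk1 > -1) (hne : gk ≠ gk1) (hz : gk 2 ≠ -1) :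
    (NormedSpace.exp (hat ((Bmat (gk 0) (gk 1) (gk 2)).mulVec
        ((Real.arccos (gk ⬝ᵥ gk1) / Real.sqrt (∑ i, (crossProduct gk gk1) i ^ 2)) •
          ((Bmat (gk 0) (gk 1) (gk 2))ᵀ.mulVec (crossProduct gk gk1)))))).mulVec gk
      = gk1 := by
  rw [sum_sq_eq_dotProduct_self] at hk hk1 ⊢
  rw [mulVec_smul, Bmat_mulVec_transpose_mulVec_of_dotProduct_eq_zero hk hz (dot_self_cross gk gk1)]
  exact exp_hat_arccos_div_smul_cross_mulVec hk hk1 hdot (dotProduct_lt_one_of_ne hk hk1 hne)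
end
end
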